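/- Non-violating trace transparency, backward direction: let φ ∈ SHMLnf be closed and guarded and let p be a system none of whose traces is violating with respect to φ (for every trace t' ∈ Act*, ¬(p ⊨v^{t'} φ)). Then for every trace t, transducer e' and system p', if ⟦φ⟧e[p] =t=> e'[p'] then p =t=> p', i.e., the instrumented system exhibits no weak trace behaviour (up to the underlying system component) that the unmonitored system cannot itself perform. -/

import Mathlib

set_option autoImplicit false

/-- A labelled transition system over observable actions `Act`;
`none` plays the role of the silent action τ. -/
structure LTS (Act : Type) where
  S : Type
  Tr : S → Option Act → S → Prop

namespace Enf

open scoped Classical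

variable {Act : Type}

/-- Zero or more silent steps. -/
def TauStar (L : LTS Act) : L.S → L.S → Prop :=
  Relation.ReflTransGen (fun p q => L.Tr p none q)

/-- The weak transition `p =a=> q`. -/
def WStep (L : LTS Act) (p : L.S) (a : Act) (q : L.S) : Prop :=
  ∃ p₁ p₂, TauStar L p p₁ ∧ L.Tr p₁ (some a) p₂ ∧ TauStar L p₂ q

/-- Weak trace `p =t=> q`. -/
inductive WTrace (L : LTS Act) : L.S → List Act → L.S → Prop
  | nil {p q : L.S} : TauStar L p q → WTrace L p [] q
  | cons {p r q : L.S} {a : Act} {t : List Act} :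
      WStep L p a r → WTrace L r t q → WTrace L p (a :: t) q

/-- SHML formulas: truth, falsehood, fixpoint variables, finite conjunctions,
modalities `[η]φ` (a guard set of actions together with an action-indexed
continuation, representing the symbolic action and the matching substitutions),
and greatest fixpoints. -/
inductive Frm (Act : Type) : Type where
  | tt : Frm Act
  | ff : Frm Act
  | var : ℕ → Frm Act
  | conj : (n : ℕ) → (Fin n → Frm Act) → Frm Act
  | box : Set Act → (Act → Frm Act) → Frm Act
  | max : ℕ → Frm Act → Frm Act

namespace Frm

/-- Free fixpoint variables. -/
def fv : Frm Act → Set ℕ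
  | .tt => ∅
  | .ff => ∅
  | .var X => {X}
  | .conj _ f => ⋃ i, fv (f i)
  | .box G k => ⋃ a ∈ G, fv (k a)
  | .max X φ => fv φ \ {X}

def Closed (φ : Frm Act) : Prop := fv φ = ∅

/-- Substitution `φ[ψ/X]` (of a closed formula `ψ`). -/
def subst : Frm Act → ℕ → Frm Act → Frm Act
  | .tt, _, _ => .tt
  | .ff, _, _ => .ff
  | .var Y, X, ψ => if Y = X then ψ else .var Y
  | .conj n f, X, ψ => .conj n (fun i => subst (f i) X ψ)
  | .box G k, X, ψ => .box G (fun a => subst (k a) X ψ)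
  | .max Y φ, X, ψ => if Y = X then .max Y φ else .max Y (subst φ X ψ)

/-- The normal-form fragment SHMLnf: conjunctions are conjunctions of
modalities with pairwise-disjoint guards, and each greatest fixpoint binds a
variable occurring free in its body. -/
inductive IsNF : Frm Act → Prop
  | tt : IsNF .tt
  | ff : IsNF .ff
  | var (X : ℕ) : IsNF (.var X)
  | conj (n : ℕ) (G : Fin n → Set Act) (k : Fin n → Act → Frm Act)
      (hdisj : ∀ i j : Fin n, i ≠ j → ∀ a : Act, a ∈ G i → a ∉ G j)
      (hk : ∀ i : Fin n, ∀ a ∈ G i, IsNF (k i a)) :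
      IsNF (.conj n fun i => .box (G i) (k i))
  | max (X : ℕ) (φ : Frm Act) (hfree : X ∈ fv φ) (hφ : IsNF φ) : IsNF (.max X φ)

/-- `gvar X φ`: the variable `X` does not occur unguarded (i.e. outside every
modality) in `φ`. -/
def gvar (X : ℕ) : Frm Act → Prop
  | .tt => True
  | .ff => True
  | .var Y => Y ≠ X
  | .conj _ f => ∀ i, gvar X (f i)
  | .box _ _ => True
  | .max Y φ => Y = X ∨ gvar X φ

/-- A formula is guarded if every occurrence of a fixpoint variable lies
beneath a modality. -/
def Guarded : Frm Act → Prop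
  | .tt => True
  | .ff => True
  | .var _ => True
  | .conj _ f => ∀ i, Guarded (f i)
  | .box G k => ∀ a ∈ G, Guarded (k a)
  | .max X φ => gvar X φ ∧ Guarded φ

/-- Number of top-level greatest-fixpoint binders. -/
def topMax : Frm Act → ℕ
  | .max _ φ => topMax φ + 1
  | _ => 0

end Frm

/-- Denotational semantics of (possibly open) formulas, relative to an
environment mapping fixpoint variables to sets of states; `max` is interpreted
as the greatest fixpoint of the induced monotone map. -/
def sem (L : LTS Act) : Frm Act → (ℕ → Set L.S) → Set L.S
  | .tt, _ => Set.univ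
  | .ff, _ => ∅
  | .var X, ρ => ρ X
  | .conj _ f, ρ => ⋂ i, sem L (f i) ρ
  | .box G k, ρ => {p | ∀ a ∈ G, ∀ q, WStep L p a q → q ∈ sem L (k a) ρ}
  | .max X φ, ρ => ⋃₀ {S | S ⊆ sem L φ (Function.update ρ X S)}

/-- Semantics of closed formulas. -/
def Sem (L : LTS Act) (φ : Frm Act) : Set L.S := sem L φ fun _ => ∅

/-- Satisfiability. -/
def SatIn (L : LTS Act) (φ : Frm Act) : Prop := (Sem L φ).Nonempty

/-- The violation relation `p ⊨v^t φ`, defined as the least relation closed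
under the given rules. -/
inductive Viol (L : LTS Act) : L.S → List Act → Frm Act → Prop
  | ff (p : L.S) : Viol L p [] .ff
  | conj {p : L.S} {t : List Act} {n : ℕ} {f : Fin n → Frm Act} (j : Fin n) :
      Viol L p t (f j) → Viol L p t (.conj n f)
  | box {p p' : L.S} {t : List Act} {a : Act} {G : Set Act} {k : Act → Frm Act} :
      a ∈ G → WStep L p a p' → Viol L p' t (k a) → Viol L p (a :: t) (.box G k)
  | max {p : L.S} {t : List Act} {X : ℕ} {φ : Frm Act} :
      Viol L p t (Frm.subst φ X (.max X φ)) → Viol L p t (.max X φ)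

/-- Transducers (enforcement monitors): identity, symbolic transformation
prefixes (a guard set of extended input actions, with `none` standing for the
insertion pattern •, an output per matched input, with `none` standing for τ,
and a continuation per matched input), finite selections, recursion, and
recursion variables. -/
inductive Trn (Act : Type) : Type where
  | id : Trn Act
  | prf : Set (Option Act) → (Option Act → Option Act) → (Option Act → Trn Act) → Trn Act
  | sel : (n : ℕ) → (Fin n → Trn Act) → Trn Act
  | fix : ℕ → Trn Act → Trn Act
  | var : ℕ → Trn Act

namespace Trn

def tsubst : Trn Act → ℕ → Trn Act → Trn Act
  | .id, _, _ => .id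
  | .prf G out k, x, s => .prf G out fun γ => tsubst (k γ) x s
  | .sel n f, x, s => .sel n fun i => tsubst (f i) x s
  | .fix y e, x, s => if y = x then .fix y e else .fix y (tsubst e x s)
  | .var y, x, s => if y = x then s else .var y

end Trn

/-- Transducer transitions: labels are pairs (input, output) where input
`none` is the insertion pattern • and output `none` is τ. -/
inductive TStep : Trn Act → Option Act × Option Act → Trn Act → Prop
  | id (a : Act) : TStep .id (some a, some a) .id
  | prf {G : Set (Option Act)} {out : Option Act → Option Act}
      {k : Option Act → Trn Act} {γ : Option Act} (h : γ ∈ G) :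
      TStep (.prf G out k) (γ, out γ) (k γ)
  | sel {n : ℕ} {f : Fin n → Trn Act} {l : Option Act × Option Act}
      {e' : Trn Act} (i : Fin n) (h : TStep (f i) l e') :
      TStep (.sel n f) l e'
  | fix {x : ℕ} {e : Trn Act} {l : Option Act × Option Act} {e' : Trn Act}
      (h : TStep (Trn.tsubst e x (.fix x e)) l e') :
      TStep (.fix x e) l e'

/-- Instrumentation of a transducer on a system. -/
inductive IStep (L : LTS Act) : Trn Act × L.S → Option Act → Trn Act × L.S → Prop
  | trn {e e' : Trn Act} {p p' : L.S} {a : Act} {μ : Option Act} :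
      L.Tr p (some a) p' → TStep e (some a, μ) e' → IStep L (e, p) μ (e', p')
  | asy {e : Trn Act} {p p' : L.S} :
      L.Tr p none p' → IStep L (e, p) none (e, p')
  | ins {e e' : Trn Act} {p : L.S} {μ : Option Act} :
      TStep e (none, μ) e' → IStep L (e, p) μ (e', p)
  | ter {e : Trn Act} {p p' : L.S} {a : Act} :
      L.Tr p (some a) p' →
      (∀ μ e', ¬ TStep e (some a, μ) e') →
      (∀ μ e', ¬ TStep e (none, μ) e') →
      IStep L (e, p) (some a) (Trn.id, p')

/-- The LTS of monitored systems `e[p]`. -/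
def instLTS (L : LTS Act) : LTS Act := ⟨Trn Act × L.S, IStep L⟩

/-- Strong bisimulations between (the state spaces of) two LTSs. -/
def IsBisim (L₁ L₂ : LTS Act) (R : L₁.S → L₂.S → Prop) : Prop :=
  ∀ s r, R s r →
    (∀ μ s', L₁.Tr s μ s' → ∃ r', L₂.Tr r μ r' ∧ R s' r') ∧
    (∀ μ r', L₂.Tr r μ r' → ∃ s', L₁.Tr s μ s' ∧ R s' r')

/-- Strong bisimilarity. -/
def Bisim (L₁ L₂ : LTS Act) (s : L₁.S) (r : L₂.S) : Prop :=
  ∃ R, IsBisim L₁ L₂ R ∧ R s r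

/-- The synthesis function `⟦-⟧e` from SHMLnf formulas to transducers:
formula variable `X` becomes monitor variable `X+1`; `tt` and `ff` become the
identity monitor; `max X.φ` becomes the corresponding recursive monitor; and a
normalised conjunction of modalities becomes a recursive selection (on the
fresh variable `0`) of symbolic prefixes that suppress (output τ, continue as
the recursion variable) actions whose continuation formula is `ff` and pass
through all other matched actions, continuing with the synthesis of the
respective continuation formula. -/
noncomputable def synth : Frm Act → Trn Act
  | .tt => .id
  | .ff => .id
  | .var X => .var (X + 1)
  | .max X φ => .fix (X + 1) (synth φ)
  | .box G k =>
      .prf {γ | ∃ a ∈ G, γ = some a}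
        (fun γ =>
          match γ with
          | some a => if k a = Frm.ff then none else some a
          | none => none)
        (fun γ =>
          match γ with
          | some a => if k a = Frm.ff then Trn.var 0 else synth (k a)
          | none => .id)
  | .conj n f => .fix 0 (.sel n fun i => synth (f i))

/-- Fuelled residual function (the fuel is consumed by fixpoint unfoldings;
on guarded closed SHMLnf formulas `topMax φ + 1` units of fuel suffice). -/
noncomputable def afterFuel : ℕ → Frm Act → Act → Frm Act
  | 0, _, _ => .tt
  | n + 1, φ, a =>
    match φ with
    | .max X ψ => afterFuel n (Frm.subst ψ X (.max X ψ)) a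
    | .conj m f =>
        if h : ∃ i : Fin m, ∃ G : Set Act, ∃ k : Act → Frm Act,
            f i = Frm.box G k ∧ a ∈ G
        then h.choose_spec.choose_spec.choose a
        else .tt
    | ψ => ψ

/-- The residual `after(φ, a)` of a guarded closed SHMLnf formula. -/
noncomputable def after (φ : Frm Act) (a : Act) : Frm Act :=
  afterFuel (Frm.topMax φ + 1) φ a

/-- Satisfaction relations (the coinductive rules of `⊨s`). -/
def IsSatRel (L : LTS Act) (R : L.S → Frm Act → Prop) : Prop :=
  (∀ p, ¬ R p .ff) ∧
  (∀ p (n : ℕ) (f : Fin n → Frm Act), R p (.conj n f) → ∀ i, R p (f i)) ∧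
  (∀ p (G : Set Act) (k : Act → Frm Act), R p (.box G k) →
      ∀ a ∈ G, ∀ q, WStep L p a q → R q (k a)) ∧
  (∀ p (X : ℕ) (φ : Frm Act), R p (.max X φ) → R p (Frm.subst φ X (.max X φ)))

/-- The largest satisfaction relation `⊨s`. -/
def SatCo (L : LTS Act) (p : L.S) (φ : Frm Act) : Prop :=
  ∃ R, IsSatRel L R ∧ R p φ

/-! Along every run of `⟦φ⟧e[p]` the monitor is either `id` or `⟦ψ⟧e` for a normal-form
formula `ψ` that the current system state does not violate. A synthesised monitor never inserts
actions, and when it consumes an action `a` it continues with a residual formula `ψ'`, any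
violation of which after a weak `a`-step yields a violation of `ψ`: it either passes `a` on and
becomes `⟦ψ'⟧e`, or suppresses `a`, which it only does when `ψ' = ff`. Suppression would thus
exhibit the violating trace `a`, so it never happens; every instrumented step is then a system
step with the same label, and the invariant is preserved. -/

section WeakTraces

variable {L₁ L₂ : LTS Act}

lemma WStep.tau_head {L : LTS Act} {q p p' : L.S} {a : Act} (hτ : L.Tr q none p)
    (h : WStep L p a p') : WStep L q a p' := by
  obtain ⟨p₁, p₂, h₁, h₂, h₃⟩ := h
  exact ⟨p₁, p₂, h₁.head hτ, h₂, h₃⟩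

lemma TauStar.map_of_invariant (f : L₁.S → L₂.S) (I : L₁.S → Prop)
    (hstep : ∀ s μ s', I s → L₁.Tr s μ s' → L₂.Tr (f s) μ (f s') ∧ I s')
    {s s' : L₁.S} (h : TauStar L₁ s s') (hs : I s) : TauStar L₂ (f s) (f s') ∧ I s' := by
  induction h with
  | refl => exact ⟨.refl, hs⟩
  | tail _ hlast ih =>
    obtain ⟨hτ, hI⟩ := ih
    obtain ⟨hlast', hI'⟩ := hstep _ _ _ hI hlast
    exact ⟨hτ.tail hlast', hI'⟩

lemma WTrace.map_of_invariant (f : L₁.S → L₂.S) (I : L₁.S → Prop)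
    (hstep : ∀ s μ s', I s → L₁.Tr s μ s' → L₂.Tr (f s) μ (f s') ∧ I s')
    {s s' : L₁.S} {t : List Act} (h : WTrace L₁ s t s') (hs : I s) :
    WTrace L₂ (f s) t (f s') := by
  induction h with
  | nil hτ => exact .nil (TauStar.map_of_invariant f I hstep hτ hs).1
  | cons hw _ ih =>
    obtain ⟨r₁, r₂, hτ₁, ha, hτ₂⟩ := hw
    obtain ⟨hτ₁', hI₁⟩ := TauStar.map_of_invariant f I hstep hτ₁ hs
    obtain ⟨ha', hI₂⟩ := hstep _ _ _ hI₁ ha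
    obtain ⟨hτ₂', hI₃⟩ := TauStar.map_of_invariant f I hstep hτ₂ hI₂
    exact .cons ⟨f r₁, f r₂, hτ₁', ha', hτ₂'⟩ (ih hI₃)

end WeakTraces

section Violation

variable {L : LTS Act}

lemma Viol.not_tt {q : L.S} {t : List Act} : ¬ Viol L q t .tt := nofun

lemma Viol.tau_head {p : L.S} {t : List Act} {ψ : Frm Act} (h : Viol L p t ψ) {q : L.S}
    (hτ : L.Tr q none p) : Viol L q t ψ := by
  induction h with
  | ff => exact .ff q
  | conj j _ ih => exact .conj j (ih hτ)
  | box ha hw hv _ => exact .box ha (hw.tau_head hτ) hv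
  | max _ ih => exact .max (ih hτ)

/-- `ψ'` plays the role of the paper's `after(ψ, a)`. -/
def Residual (L : LTS Act) (ψ : Frm Act) (a : Act) (ψ' : Frm Act) : Prop :=
  ∀ ⦃q q' : L.S⦄ ⦃t : List Act⦄,
    WStep L q a q' → Viol L q' t ψ' → Viol L q (a :: t) ψ

lemma Residual.tt (ψ : Frm Act) (a : Act) : Residual L ψ a .tt :=
  fun _ _ _ _ hv => (Viol.not_tt hv).elim

lemma Residual.max {X : ℕ} {φ ψ' : Frm Act} {a : Act}
    (h : Residual L (φ.subst X (.max X φ)) a ψ') : Residual L (.max X φ) a ψ' :=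
  fun _ _ _ hw hv => .max (h hw hv)

lemma Residual.conj_box {n : ℕ} {G : Fin n → Set Act} {k : Fin n → Act → Frm Act}
    {i : Fin n} {a : Act} (ha : a ∈ G i) :
    Residual L (.conj n fun i => .box (G i) (k i)) a (k i a) :=
  fun _ _ _ hw hv => .conj i (.box ha hw hv)

end Violation

namespace Frm

lemma mem_fv_subst_of_ne {X Y : ℕ} {χ : Frm Act} (hYX : Y ≠ X) {ψ : Frm Act}
    (h : Y ∈ ψ.fv) : Y ∈ (ψ.subst X χ).fv := by
  induction ψ with
  | tt | ff => simp [fv] at h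
  | var Z =>
    obtain rfl : Y = Z := h
    simp [subst, hYX, fv]
  | conj n f ih =>
    simp only [fv, subst, Set.mem_iUnion] at h ⊢
    obtain ⟨i, hi⟩ := h
    exact ⟨i, ih i hi⟩
  | box G k ih =>
    simp only [fv, subst, Set.mem_iUnion] at h ⊢
    obtain ⟨a, ha, hi⟩ := h
    exact ⟨a, ha, ih a hi⟩
  | max Z φ ih =>
    by_cases hZX : Z = X
    · simpa [subst, hZX] using h
    · simp only [fv, Set.mem_sdiff] at h
      simp only [subst, if_neg hZX, fv, Set.mem_sdiff]
      exact ⟨ih h.1, h.2⟩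

lemma subst_eq_ff_iff {χ : Frm Act} (hχ : χ ≠ .ff) {ψ : Frm Act} {X : ℕ} :
    ψ.subst X χ = .ff ↔ ψ = .ff := by
  cases ψ with
  | var Y => by_cases h : Y = X <;> simp [subst, h, hχ]
  | max Y φ => by_cases h : Y = X <;> simp [subst, h]
  | _ => simp [subst]

lemma IsNF.subst {ψ : Frm Act} (hψ : ψ.IsNF) {X : ℕ} {χ : Frm Act} (hχ : χ.IsNF) :
    (ψ.subst X χ).IsNF := by
  induction hψ with
  | tt => exact .tt
  | ff => exact .ff
  | var Y =>
    unfold Frm.subst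
    split
    · exact hχ
    · exact .var Y
  | conj n G k hdisj _ ih => exact .conj n G (fun i a => (k i a).subst X χ) hdisj ih
  | max Y φ hfree hφ ih =>
    unfold Frm.subst
    split
    · exact .max Y φ hfree hφ
    · exact .max Y _ (mem_fv_subst_of_ne ‹_› hfree) ih

lemma IsNF.unfold {X : ℕ} {φ : Frm Act} (h : (Frm.max X φ).IsNF) :
    (φ.subst X (.max X φ)).IsNF := by
  cases h with
  | max _ _ hfree hφ => exact hφ.subst (.max X φ hfree hφ)

end Frm

section Synthesis

-- Only a bare modality, which `IsNF` excludes, synthesises a free `var 0`.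
lemma tsubst_zero_synth {s : Trn Act} {ψ : Frm Act} (hψ : ψ.IsNF) :
    (synth ψ).tsubst 0 s = synth ψ := by
  induction hψ with
  | tt | ff => rfl
  | var | conj => simp [synth, Trn.tsubst]
  | max X φ _ _ ih => simp [synth, Trn.tsubst, ih]

-- `χ ≠ ff` is needed because `synth` decides suppression by comparing continuations with `ff`.
lemma synth_subst {χ : Frm Act} (hχ : χ ≠ .ff) (ψ : Frm Act) (X : ℕ) :
    synth (ψ.subst X χ) = (synth ψ).tsubst (X + 1) (synth χ) := by
  induction ψ generalizing X with
  | tt | ff => rfl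
  | var Y => by_cases h : Y = X <;> simp [Frm.subst, synth, Trn.tsubst, h]
  | conj n f ih => simp [Frm.subst, synth, Trn.tsubst, ih]
  | box G k ih =>
    simp only [Frm.subst, synth, Trn.tsubst, Frm.subst_eq_ff_iff hχ]
    congr 1
    funext γ
    cases γ with
    | none => rfl
    | some a => by_cases h : k a = .ff <;> simp [h, Trn.tsubst, ih]
  | max Y φ ih =>
    by_cases h : Y = X
    · simp [Frm.subst, synth, Trn.tsubst, h]
    · simp [Frm.subst, synth, Trn.tsubst, h, ih]

lemma TStep.of_fix {x : ℕ} {e e' : Trn Act} {l : Option Act × Option Act}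
    (h : TStep (.fix x e) l e') : TStep (e.tsubst x (.fix x e)) l e' := by
  cases h
  assumption

lemma tstep_synth_conj {n : ℕ} {G : Fin n → Set Act} {k : Fin n → Act → Frm Act}
    (hk : ∀ i, ∀ a ∈ G i, (k i a).IsNF) {l : Option Act × Option Act} {e' : Trn Act}
    (h : TStep (synth (.conj n fun i => .box (G i) (k i))) l e') :
    ∃ i, ∃ a ∈ G i, l.1 = some a ∧
      (l.2 = none ∧ k i a = .ff ∨ l.2 = some a ∧ e' = synth (k i a)) := by
  cases h.of_fix with
  | sel i h =>
    simp only [synth, Trn.tsubst] at h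
    cases h with
    | prf hmem =>
      obtain ⟨a, ha, rfl⟩ := hmem
      refine ⟨i, a, ha, rfl, ?_⟩
      by_cases hff : k i a = .ff
      · simp [hff]
      · simp [hff, tsubst_zero_synth (hk i a ha)]

theorem tstep_synth {L : LTS Act} {ψ : Frm Act} (hψ : ψ.IsNF) {l : Option Act × Option Act}
    {e' : Trn Act} (h : TStep (synth ψ) l e') :
    ∃ a ψ', l.1 = some a ∧ Residual L ψ a ψ' ∧
      (l.2 = some a ∧ ψ'.IsNF ∧ e' = synth ψ' ∨ l.2 = none ∧ ψ' = .ff) := by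
  generalize hs : synth ψ = e at h
  induction h generalizing ψ with
  | id a => exact ⟨a, .tt, rfl, .tt ψ a, .inl ⟨rfl, .tt, rfl⟩⟩
  | prf | sel => cases hψ <;> simp [synth] at hs
  | @fix x e l e' hunf ih =>
    cases hψ with
    | tt | ff | var => simp [synth] at hs
    | max X φ hfree hφ =>
      simp only [synth, Trn.fix.injEq] at hs
      obtain ⟨rfl, rfl⟩ := hs
      have hsynth_unfold := synth_subst (χ := .max X φ) nofun φ X
      obtain ⟨a, ψ', hl, hres, hout⟩ := ih (Frm.IsNF.max X φ hfree hφ).unfold hsynth_unfold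
      exact ⟨a, ψ', hl, hres.max, hout⟩
    | conj n G k _ hk =>
      obtain ⟨i, a, ha, hl, hout⟩ := tstep_synth_conj hk (hs ▸ TStep.fix hunf)
      refine ⟨a, k i a, hl, .conj_box ha, ?_⟩
      rcases hout with ⟨hμ, hff⟩ | ⟨hμ, rfl⟩
      · exact .inr ⟨hμ, hff⟩
      · exact .inl ⟨hμ, hk i a ha, rfl⟩

end Synthesis

section Instrumentation

variable {L : LTS Act}

def NonviolatingConfig (L : LTS Act) (s : (instLTS L).S) : Prop :=
  s.1 = .id ∨ ∃ ψ : Frm Act, ψ.IsNF ∧ s.1 = synth ψ ∧ ∀ t, ¬ Viol L s.2 t ψ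

lemma NonviolatingConfig.istep {s s' : (instLTS L).S} {μ : Option Act}
    (hs : NonviolatingConfig L s) (h : IStep L s μ s') :
    L.Tr s.2 μ s'.2 ∧ NonviolatingConfig L s' := by
  cases h with
  | @trn _ _ q q' a _ htr hts =>
    rcases hs with rfl | ⟨ψ, hψ, rfl, hnv⟩
    · cases hts
      exact ⟨htr, .inl rfl⟩
    obtain ⟨b, ψ', hb, hres, hout⟩ := tstep_synth (L := L) hψ hts
    obtain rfl : a = b := Option.some_injective _ hb
    have hviol : ∀ t, Viol L q' t ψ' → Viol L q (a :: t) ψ :=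
      fun _ => hres ⟨q, q', .refl, htr, .refl⟩
    rcases hout with ⟨rfl, hψ', rfl⟩ | ⟨-, rfl⟩
    · exact ⟨htr, .inr ⟨ψ', hψ', rfl, fun t hv => hnv _ (hviol t hv)⟩⟩
    · exact absurd (hviol [] (.ff q')) (hnv [a])
  | asy htr =>
    refine ⟨htr, ?_⟩
    rcases hs with h | ⟨ψ, hψ, he, hnv⟩
    · exact .inl h
    · exact .inr ⟨ψ, hψ, he, fun t hv => hnv t (hv.tau_head htr)⟩
  | ins hts =>
    exfalso
    rcases hs with rfl | ⟨ψ, hψ, rfl, -⟩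
    · cases hts
    · obtain ⟨_, _, hb, -⟩ := tstep_synth (L := L) hψ hts
      cases hb
  | ter htr => exact ⟨htr, .inl rfl⟩

end Instrumentation

theorem nonviolating_transparency_bwd_general (Act : Type) (L : LTS Act) (φ : Frm Act)
    (hnf : φ.IsNF)
    (p : L.S) (hnv : ∀ t' : List Act, ¬ Viol L p t' φ) :
    ∀ (t : List Act) (e' : Trn Act) (p' : L.S),
      WTrace (instLTS L) (synth φ, p) t (e', p') → WTrace L p t p' :=
  fun _ _ _ h => h.map_of_invariant Prod.snd (NonviolatingConfig L)
    (fun _ _ _ hs hstep => hs.istep hstep) (.inr ⟨φ, hnf, rfl, hnv⟩)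

/-- non-violating trace transparency, backward direction: if no
trace is violating for p w.r.t. the closed guarded SHMLnf formula φ, then every
weak trace of the instrumented system ⟦φ⟧e[p] (up to the underlying system
component) is a weak trace of p. -/
theorem nonviolating_transparency_bwd (Act : Type) (L : LTS Act) (φ : Frm Act)
    (hclosed : φ.Closed) (hnf : φ.IsNF) (hguard : φ.Guarded)
    (p : L.S) (hnv : ∀ t' : List Act, ¬ Viol L p t' φ) :
    ∀ (t : List Act) (e' : Trn Act) (p' : L.S),
      WTrace (instLTS L) (synth φ, p) t (e', p') → WTrace L p t p' :=
  nonviolating_transparency_bwd_general Act L φ hnf p hnv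

end Enf
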